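/- arXiv:2110.05256 — 2 statements merged into one kernel-verified Lean document; each statement's English description precedes it below -/
import Mathlib

section
/- Let q>2 and let C be a λ-fold 1-packing in H(n,q) with q, n, and λ all even. Then the distance distribution of C satisfies n(q-1)A_0 + 2(q-1)A_1 + 2A_2 ≤ (n+1)(q-1)λ − q. -/
/-!
Fix a codeword `x` and let `nᵢ` count the codewords (with multiplicity) at distance `i` from `x`.
Summing the packing bound over the ball `B(x, 1)` and double counting with
`|B(x, 1) ∩ B(c, 1)| = 1 + n(q - 1), q, 2` for `d(x, c) = 0, 1, 2` (and `0` beyond) gives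
`(1 + n(q - 1)) n₀ + q n₁ + 2 n₂ ≤ (1 + n(q - 1)) λ`, and the packing bound at `x` itself gives
`n₀ + n₁ ≤ λ`. Together these give the claimed inequality for `(n₀, n₁, n₂)` except when
`n₀ = 1` and `n₁ = λ - 1`; there, as `n`, `q` and `λ` are even, the left side of the ball
inequality is odd and its right side even, which gains the missing `1`. Averaging over `x ∈ C`
gives the statement.
-/

open Finset Function

section HammingBall

variable {ι α : Type*} [Fintype ι] [DecidableEq α]

theorem hammingDist_le_one_iff {x y : ι → α} :
    hammingDist x y ≤ 1 ↔ ∀ i, x i ≠ y i → ∀ j, x j ≠ y j → i = j := by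
  simp [hammingDist, Finset.card_le_one]

theorem hammingDist_le_one_of_eqOn_compl {x y : ι → α} (i : ι) (h : ∀ j ≠ i, x j = y j) :
    hammingDist x y ≤ 1 :=
  hammingDist_le_one_iff.2 fun _ hj _ hk =>
    (not_imp_comm.1 (h _) hj).trans (not_imp_comm.1 (h _) hk).symm

variable [DecidableEq ι]

theorem eq_update_of_hammingDist_le_one {x v : ι → α} {i : ι} (h : hammingDist x v ≤ 1)
    (hi : x i ≠ v i) : v = update x i (v i) := by
  funext j
  rcases eq_or_ne j i with rfl | hj
  · simp
  · rw [update_of_ne hj]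
    by_contra hne
    exact hj (hammingDist_le_one_iff.1 h j (Ne.symm hne) i hi)

theorem hammingDist_update_le_one (x : ι → α) (i : ι) (a : α) :
    hammingDist x (update x i a) ≤ 1 :=
  hammingDist_le_one_of_eqOn_compl i fun _ hj => (update_of_ne hj a x).symm

theorem hammingDist_update_le_one_of_ne_imp {x y : ι → α} {a b : ι}
    (hdiff : ∀ k, x k ≠ y k → k = a ∨ k = b) : hammingDist y (update x a (y a)) ≤ 1 := by
  refine hammingDist_le_one_of_eqOn_compl b fun k hkb => ?_
  rcases eq_or_ne k a with rfl | hka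
  · simp
  · rw [update_of_ne hka]
    by_contra hne
    exact (hdiff k (Ne.symm hne)).elim hka hkb

variable [Fintype α]

def hammingBall (x : ι → α) (r : ℕ) : Finset (ι → α) := {v | hammingDist x v ≤ r}

@[simp]
theorem mem_hammingBall {x v : ι → α} {r : ℕ} : v ∈ hammingBall x r ↔ hammingDist x v ≤ r := by
  simp [hammingBall]

theorem card_hammingBall_one (x : ι → α) :
    #(hammingBall x 1) = 1 + Fintype.card ι * (Fintype.card α - 1) := by
  have hball : hammingBall x 1 = insert x ((univ.sigma fun i => univ.erase (x i)).image
      fun p => update x p.1 p.2) := by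
    ext v
    simp only [mem_hammingBall, mem_insert, mem_image, mem_sigma, mem_univ, mem_erase, true_and,
      and_true, Sigma.exists]
    constructor
    · intro hv
      by_cases hxv : x = v
      · exact .inl hxv.symm
      · obtain ⟨i, hi⟩ := Function.ne_iff.1 hxv
        exact .inr ⟨i, v i, Ne.symm hi, (eq_update_of_hammingDist_le_one hv hi).symm⟩
    · rintro (rfl | ⟨i, a, -, rfl⟩)
      · simp
      · exact hammingDist_update_le_one x i a
  have hinj : Set.InjOn (fun p : (_ : ι) × α => update x p.1 p.2)
      (univ.sigma fun i => univ.erase (x i)) := by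
    rintro ⟨i, a⟩ hia ⟨j, b⟩ - heq
    simp only [coe_sigma, Set.mem_sigma_iff, coe_erase, Set.mem_sdiff, Set.mem_singleton_iff] at hia
    have hij : i = j := by
      by_contra hij
      simpa [update_of_ne hij, hia.2.2] using congrFun heq i
    subst hij
    simpa using congrFun heq i
  have hx : x ∉ (univ.sigma fun i => univ.erase (x i)).image fun p => update x p.1 p.2 := by
    simp only [mem_image, mem_sigma, mem_univ, mem_erase, true_and, Sigma.exists, not_exists,
      not_and]
    intro i a ha h
    simpa [ha] using congrFun h i
  rw [hball, card_insert_of_notMem hx, card_image_of_injOn hinj, card_sigma]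
  simp [card_univ, add_comm]

theorem card_hammingBall_one_inter_of_hammingDist_eq_one {x y : ι → α}
    (h : hammingDist x y = 1) : #(hammingBall x 1 ∩ hammingBall y 1) = Fintype.card α := by
  obtain ⟨i, hi⟩ := Function.ne_iff.1 (hammingDist_pos.1 (h ▸ Nat.one_pos))
  have hy := eq_update_of_hammingDist_le_one h.le hi
  have hline : hammingBall x 1 ∩ hammingBall y 1 = univ.image (update x i) := by
    ext v
    simp only [mem_inter, mem_hammingBall, mem_image, mem_univ, true_and]
    constructor
    · rintro ⟨hxv, hyv⟩
      refine ⟨v i, ?_⟩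
      by_cases hvi : x i = v i
      · have hv := eq_update_of_hammingDist_le_one hyv (hvi ▸ hi.symm)
        rw [hy, update_idem] at hv
        exact hv.symm
      · exact (eq_update_of_hammingDist_le_one hxv hvi).symm
    · rintro ⟨a, rfl⟩
      refine ⟨hammingDist_update_le_one x i a, ?_⟩
      rw [hy]
      exact hammingDist_le_one_of_eqOn_compl i fun j hj => by simp [update_of_ne hj]
  rw [hline, card_image_of_injective _ (update_injective x i), card_univ]

theorem card_hammingBall_one_inter_of_hammingDist_eq_two {x y : ι → α}
    (h : hammingDist x y = 2) : #(hammingBall x 1 ∩ hammingBall y 1) = 2 := by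
  obtain ⟨i, j, hij, hD⟩ := card_eq_two.1 h
  have hdiff : ∀ k, x k ≠ y k ↔ k = i ∨ k = j := by
    simpa [Finset.ext_iff] using hD
  have hi : x i ≠ y i := (hdiff i).2 (.inl rfl)
  have hj : x j ≠ y j := (hdiff j).2 (.inr rfl)
  have hpair : hammingBall x 1 ∩ hammingBall y 1 = {update x i (y i), update x j (y j)} := by
    ext v
    simp only [mem_inter, mem_hammingBall, mem_insert, mem_singleton]
    constructor
    · rintro ⟨hxv, hyv⟩
      by_cases hvi : x i = v i
      · have hv := eq_update_of_hammingDist_le_one hyv (hvi ▸ hi.symm)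
        have hvj : v j = y j := by rw [hv, update_of_ne hij.symm]
        right
        rw [eq_update_of_hammingDist_le_one hxv (hvj ▸ hj), hvj]
      · have hv := eq_update_of_hammingDist_le_one hxv hvi
        have hvj : v j = x j := by rw [hv, update_of_ne hij.symm]
        have hvi' := congrFun (eq_update_of_hammingDist_le_one hyv (hvj ▸ hj.symm)) i
        rw [update_of_ne hij] at hvi'
        left
        rw [hv, hvi']
    · rintro (rfl | rfl)
      · exact ⟨hammingDist_update_le_one x i (y i),
          hammingDist_update_le_one_of_ne_imp fun k hk => (hdiff k).1 hk⟩
      · exact ⟨hammingDist_update_le_one x j (y j),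
          hammingDist_update_le_one_of_ne_imp fun k hk => ((hdiff k).1 hk).symm⟩
  rw [hpair, card_pair]
  intro heq
  exact hi (by simpa [update_of_ne hij] using (congrFun heq i).symm)

theorem hammingBall_one_disjoint_of_three_le {x y : ι → α} (h : 3 ≤ hammingDist x y) :
    Disjoint (hammingBall x 1) (hammingBall y 1) := by
  rw [disjoint_left]
  intro v hxv hyv
  have := hammingDist_triangle x v y
  rw [mem_hammingBall] at hxv hyv
  rw [hammingDist_comm v y] at this
  omega

def unitBallInterCard (N Q : ℕ) : ℕ → ℕ
  | 0 => 1 + N * (Q - 1)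
  | 1 => Q
  | 2 => 2
  | _ + 3 => 0

theorem card_hammingBall_one_inter (x y : ι → α) :
    #(hammingBall x 1 ∩ hammingBall y 1) =
      unitBallInterCard (Fintype.card ι) (Fintype.card α) (hammingDist x y) := by
  match h : hammingDist x y with
  | 0 => rw [hammingDist_eq_zero.1 h, inter_self, card_hammingBall_one, unitBallInterCard]
  | 1 => exact card_hammingBall_one_inter_of_hammingDist_eq_one h
  | 2 => exact card_hammingBall_one_inter_of_hammingDist_eq_two h
  | _ + 3 => exact card_eq_zero.2 (disjoint_iff_inter_eq_empty.1
      (hammingBall_one_disjoint_of_three_le (by omega)))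

end HammingBall

theorem Multiset.sum_map_unitBallInterCard {β : Type*} (N Q : ℕ) (f : β → ℕ) (C : Multiset β) :
    (C.map fun c => unitBallInterCard N Q (f c)).sum =
      (1 + N * (Q - 1)) * card (C.filter (f · = 0)) + Q * card (C.filter (f · = 1)) +
        2 * card (C.filter (f · = 2)) := by
  induction C using Multiset.induction_on with
  | empty => simp
  | cons c C ih =>
    simp only [Multiset.map_cons, Multiset.sum_cons, Multiset.filter_cons, ih]
    match f c with
    | 0 => simp [unitBallInterCard]; ring
    | 1 => simp [unitBallInterCard]; ring
    | 2 => simp [unitBallInterCard]; ring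
    | _ + 3 => simp [unitBallInterCard]

theorem Multiset.card_filter_le_one_eq_add {β : Type*} (f : β → ℕ) (C : Multiset β) :
    card (C.filter (f · ≤ 1)) = card (C.filter (f · = 0)) + card (C.filter (f · = 1)) := by
  induction C using Multiset.induction_on with
  | empty => simp
  | cons c C ih =>
    rcases (show f c = 0 ∨ f c = 1 ∨ 2 ≤ f c by omega) with h | h | h
    · simp [h, ih, add_right_comm]
    · simp [h, ih, add_assoc]
    · simp [ih, show ¬f c ≤ 1 by omega, show f c ≠ 0 by omega, show f c ≠ 1 by omega]

theorem Finset.sum_card_filter_eq_sum_map_card_filter {β γ : Type*} (s : Finset β)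
    (C : Multiset γ) (R : β → γ → Prop) [∀ b c, Decidable (R b c)] :
    ∑ b ∈ s, Multiset.card (C.filter (R b)) = (C.map fun c => #{b ∈ s | R b c}).sum := by
  induction C using Multiset.induction_on with
  | empty => simp
  | cons c C ih =>
    rw [Multiset.map_cons, Multiset.sum_cons, ← ih, Finset.card_filter, ← sum_add_distrib]
    refine sum_congr rfl fun b _ => ?_
    rw [Multiset.filter_cons]
    split_ifs <;> simp [add_comm]

theorem weighted_count_le_of_ball_count_le {N Q lam n₀ n₁ n₂ : ℕ} (hQ : 2 < Q) (hQe : Even Q)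
    (hNe : Even N) (hlam : Even lam) (hn₀ : 1 ≤ n₀) (hcentre : n₀ + n₁ ≤ lam)
    (hball : (1 + N * (Q - 1)) * n₀ + Q * n₁ + 2 * n₂ ≤ (1 + N * (Q - 1)) * lam) :
    N * (Q - 1) * n₀ + 2 * (Q - 1) * n₁ + 2 * n₂ + Q ≤ (N + 1) * (Q - 1) * lam := by
  obtain ⟨r, rfl⟩ : ∃ r, Q = r + 3 := ⟨Q - 3, by omega⟩
  simp only [show r + 3 - 1 = r + 2 by omega] at hball ⊢
  rcases le_or_gt (n₁ + 2) lam with hslack | htight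
  · nlinarith
  · obtain rfl : n₀ = 1 := by omega
    obtain rfl : lam = n₁ + 1 := by omega
    -- the ball count is odd while its bound is even, so the bound cannot be attained
    have hodd : Odd ((1 + N * (r + 2)) * 1 + (r + 3) * n₁ + 2 * n₂) := by
      rw [mul_one, add_assoc]
      exact (hNe.mul_right _).one_add.add_even ((hQe.mul_right _).add (even_two_mul _))
    have hne : (1 + N * (r + 2)) * 1 + (r + 3) * n₁ + 2 * n₂ ≠ (1 + N * (r + 2)) * (n₁ + 1) :=
      fun h => Nat.not_even_iff_odd.2 hodd (h ▸ hlam.mul_left _)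
    have hstrict := lt_of_le_of_ne hball hne
    nlinarith

section Packing

variable {ι α : Type*} [Fintype ι] [DecidableEq ι] [Fintype α] [DecidableEq α]

def IsPacking (lam : ℕ) (C : Multiset (ι → α)) : Prop :=
  ∀ v, Multiset.card (C.filter (hammingDist v · ≤ 1)) ≤ lam

-- The paper's `A i` is the average of `distCount C x i` over `x ∈ C`.
def distCount (C : Multiset (ι → α)) (x : ι → α) (i : ℕ) : ℕ :=
  Multiset.card (C.filter (hammingDist x · = i))

theorem sum_card_filter_hammingBall_one (x : ι → α) (C : Multiset (ι → α)) :
    ∑ v ∈ hammingBall x 1, Multiset.card (C.filter (hammingDist v · ≤ 1)) =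
      (1 + Fintype.card ι * (Fintype.card α - 1)) * distCount C x 0 +
        Fintype.card α * distCount C x 1 + 2 * distCount C x 2 := by
  rw [Finset.sum_card_filter_eq_sum_map_card_filter, distCount, distCount, distCount,
    ← Multiset.sum_map_unitBallInterCard]
  refine congrArg _ (Multiset.map_congr rfl fun c _ => ?_)
  rw [← card_hammingBall_one_inter]
  congr 1
  ext v
  simp [hammingDist_comm]

theorem IsPacking.distCount_bound {lam : ℕ} {C : Multiset (ι → α)} (hC : IsPacking lam C)
    (hQ : 2 < Fintype.card α) (hQe : Even (Fintype.card α)) (hNe : Even (Fintype.card ι))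
    (hlam : Even lam) {x : ι → α} (hx : x ∈ C) :
    Fintype.card ι * (Fintype.card α - 1) * distCount C x 0 +
        2 * (Fintype.card α - 1) * distCount C x 1 + 2 * distCount C x 2 + Fintype.card α ≤
      (Fintype.card ι + 1) * (Fintype.card α - 1) * lam := by
  refine weighted_count_le_of_ball_count_le hQ hQe hNe hlam ?_ ?_ ?_
  · exact Multiset.card_pos_iff_exists_mem.2 ⟨x, Multiset.mem_filter.2 ⟨hx, hammingDist_self x⟩⟩
  · rw [distCount, distCount, ← Multiset.card_filter_le_one_eq_add]
    exact hC x
  · rw [← sum_card_filter_hammingBall_one, ← card_hammingBall_one x, ← smul_eq_mul]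
    exact Finset.sum_le_card_nsmul _ _ _ fun v _ => hC v

end Packing

/-- Lemma: λ-fold 1-packing distance distribution bound (even case). -/
theorem stmt_1 (q n lam : ℕ) (hq : 2 < q)
    (hqe : Even q) (hne : Even n) (hlame : Even lam)
    (C : Multiset (Fin n → Fin q)) (hC : C ≠ 0)
    (hpack : ∀ v : Fin n → Fin q,
      (C.filter (fun c => hammingDist v c ≤ 1)).card ≤ lam)
    (A : ℕ → ℚ)
    (hA : ∀ i, A i = (Multiset.card C : ℚ)⁻¹ *
      ((C.map (fun x => ((C.filter (fun y => hammingDist x y = i)).card : ℚ))).sum)) :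
    (n : ℚ) * (q - 1) * A 0 + 2 * (q - 1) * A 1 + 2 * A 2
      ≤ (n + 1) * (q - 1) * lam - q := by
  have hm : (Multiset.card C : ℚ) ≠ 0 := by simpa using hC
  have hlocal : ∀ x ∈ C, (n : ℚ) * (q - 1) * distCount C x 0 + 2 * (q - 1) * distCount C x 1 +
      2 * distCount C x 2 ≤ (n + 1) * (q - 1) * lam - q := by
    intro x hx
    have h := IsPacking.distCount_bound (α := Fin q) hpack (by simpa) (by simpa) (by simpa) hlame hx
    simp only [Fintype.card_fin] at h
    have h' := (Nat.cast_le (α := ℚ)).2 h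
    push_cast [Nat.cast_sub (by omega : 1 ≤ q)] at h'
    linarith
  calc (n : ℚ) * (q - 1) * A 0 + 2 * (q - 1) * A 1 + 2 * A 2
      = (Multiset.card C : ℚ)⁻¹ * (C.map fun x => (n : ℚ) * (q - 1) * distCount C x 0 +
          2 * (q - 1) * distCount C x 1 + 2 * distCount C x 2).sum := by
        simp only [hA, Multiset.sum_map_add, Multiset.sum_map_mul_left, distCount]
        ring
    _ ≤ (Multiset.card C : ℚ)⁻¹ * (Multiset.card C • ((n + 1) * (q - 1) * lam - q)) := by
        gcongr
        simpa using Multiset.sum_le_card_nsmul _ _ (Multiset.forall_mem_map_iff.2 hlocal)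
    _ = (n + 1) * (q - 1) * lam - q := by
        rw [nsmul_eq_mul, inv_mul_cancel_left₀ hm]
end

section
/- Let q be a prime power, m ≥ 2, n = (q^m − q)/(q−1), and λ ∈ {1,...,q}. Then there exists a λ-fold 1-packing with minimum distance at least 2 in H(n,q) of size exactly λq^n/(n(q−1)+q), and no larger such packing exists; i.e., the maximum size of a λ-fold 1-packing with minimum distance ≥ 2 in H(n,q) is λq^n/(nq−n+q). -/
/-!
Upper bound. For a character `ψ` of `(ι → G)`, `|G| = q`, `|ι| = n`, let `σ ψ` be the sum of `ψ`
over the words of weight one and `S ψ` its sum over the code `C`. Each coordinate contributes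
`q - 1` or `-1` to `σ ψ`, so `σ ψ = q k - n`; when `q ∣ n` this is a multiple of `q` and
`σ (σ + q) ≥ 0`. By Parseval, `∑ ψ, σ (σ + q) |S|²` equals `qⁿ ∑ v, g v ²`, where `g v` counts the
codewords adjacent to `v`: the cross term `∑ ψ, σ |S|²` counts adjacent pairs of codewords, of
which there are none. Keeping only the trivial character,
`E (E + q) |C|² ≤ qⁿ ∑ g² ≤ qⁿ λ ∑ g = qⁿ λ E |C|` with `E = n (q - 1)`, and `E + q = qᵐ`.

Construction. Index the coordinates by the points of `ℙ(F^m)` other than a point `P`, and let `H`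
send `x` to `∑ x p • rep p`. Then `H` is onto, injective on words of weight at most one, and sends
no word of weight one into the line `P`. Hence the union of the `λ` cosets `H⁻¹ (t • rep P)`,
`t ∈ T`, has minimum distance two, meets every ball of radius one in at most `λ` words, and has
`λ qⁿ⁻ᵐ` words.
-/

open Finset ComplexConjugate
open scoped LinearAlgebra.Projectivization

section HammingSingle

variable {ι G : Type*} [Fintype ι] [DecidableEq ι] [Zero G] [DecidableEq G]

lemma hammingNorm_single (i : ι) {a : G} (ha : a ≠ 0) :
    hammingNorm (Pi.single i a : ι → G) = 1 := by
  rw [hammingNorm, card_eq_one]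
  exact ⟨i, by ext j; by_cases hj : j = i <;> simp [hj, ha]⟩

lemma eq_single_of_hammingNorm_le_one {x : ι → G} (hx : hammingNorm x ≤ 1) {i : ι}
    (hi : x i ≠ 0) : x = Pi.single i (x i) := by
  ext j
  by_cases hj : j = i
  · subst hj; simp
  · rw [Pi.single_eq_of_ne hj]
    by_contra hxj
    exact hj (card_le_one.mp hx j (by simpa using hxj) i (by simpa using hi))

lemma exists_eq_single_of_hammingNorm_le_one [Nonempty ι] {x : ι → G} (hx : hammingNorm x ≤ 1) :
    ∃ i a, x = Pi.single i a := by
  by_cases hx0 : x = 0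
  · exact ⟨Classical.arbitrary ι, 0, by simp [hx0]⟩
  · obtain ⟨i, hi⟩ := Function.ne_iff.mp hx0
    exact ⟨i, x i, eq_single_of_hammingNorm_le_one hx hi⟩

lemma hammingNorm_eq_one_iff {x : ι → G} :
    hammingNorm x = 1 ↔ ∃ i a, a ≠ 0 ∧ Pi.single i a = x := by
  constructor
  · intro hx
    obtain ⟨i, hi⟩ := Function.ne_iff.mp ((hammingNorm_ne_zero_iff (x := x)).mp (by simp [hx]))
    exact ⟨i, x i, hi, (eq_single_of_hammingNorm_le_one hx.le hi).symm⟩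
  · rintro ⟨i, a, ha, rfl⟩
    exact hammingNorm_single i ha

lemma sum_hammingNorm_eq_one [Fintype G] {M : Type*} [AddCommMonoid M] (f : (ι → G) → M) :
    ∑ x with hammingNorm x = 1, f x = ∑ i, ∑ a with a ≠ 0, f (Pi.single i a) := by
  have hsphere : ({x | hammingNorm x = 1} : Finset (ι → G)) =
      (univ ×ˢ ({a | a ≠ 0} : Finset G)).image fun p => Pi.single p.1 p.2 := by
    ext x
    simp [hammingNorm_eq_one_iff]
  rw [hsphere, sum_image, sum_product]
  rintro ⟨i, a⟩ hp ⟨j, b⟩ - hij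
  have ha : a ≠ 0 := by simpa using hp
  have hij' : i = j := by
    by_contra h
    simpa [Pi.single_eq_of_ne h, ha] using congr_fun hij i
  subst hij'
  simpa using hij

lemma card_hammingNorm_eq_one [Fintype G] :
    #{x : ι → G | hammingNorm x = 1} = Fintype.card ι * (Fintype.card G - 1) := by
  rw [card_eq_sum_ones, sum_hammingNorm_eq_one]
  simp [filter_ne', card_univ]

end HammingSingle

section Packing

variable {ι α : Type*} [Fintype ι] [DecidableEq α]

def IsFoldPacking (lam : ℕ) (C : Finset (ι → α)) : Prop :=
  (∀ x ∈ C, ∀ y ∈ C, x ≠ y → 2 ≤ hammingDist x y) ∧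
    ∀ v, #{c ∈ C | hammingDist v c ≤ 1} ≤ lam

def neighborCount (C : Finset (ι → α)) (v : ι → α) : ℕ := #{c ∈ C | hammingDist v c = 1}

lemma neighborCount_eq_zero_of_mem {C : Finset (ι → α)}
    (hd : ∀ x ∈ C, ∀ y ∈ C, x ≠ y → 2 ≤ hammingDist x y) {c : ι → α} (hc : c ∈ C) :
    neighborCount C c = 0 := by
  rw [neighborCount, card_eq_zero, filter_eq_empty_iff]
  intro c' hc' h1
  have := hd c hc c' hc' (by rintro rfl; simp at h1)
  omega

lemma IsFoldPacking.map {κ β : Type*} [Fintype κ] [DecidableEq β] {lam : ℕ} {C : Finset (ι → α)}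
    (hC : IsFoldPacking lam C) (e : (ι → α) ≃ (κ → β))
    (he : ∀ x y, hammingDist (e x) (e y) = hammingDist x y) :
    IsFoldPacking lam (C.map e.toEmbedding) := by
  refine ⟨?_, fun v => ?_⟩
  · simp only [mem_map_equiv]
    intro x hx y hy hxy
    have := hC.1 _ hx _ hy (by simpa using hxy)
    rwa [← he, e.apply_symm_apply, e.apply_symm_apply] at this
  · rw [filter_map, card_map]
    convert hC.2 (e.symm v) using 3
    rw [Function.comp_apply, ← he, Equiv.apply_symm_apply]
    rfl

lemma hammingDist_arrowCongr {κ β : Type*} [Fintype κ] [DecidableEq β] (e₁ : ι ≃ κ) (e₂ : α ≃ β)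
    (x y : ι → α) : hammingDist (e₁.arrowCongr e₂ x) (e₁.arrowCongr e₂ y) = hammingDist x y := by
  simp only [hammingDist, Equiv.arrowCongr_apply, Function.comp_apply, ne_eq,
    EmbeddingLike.apply_eq_iff_eq]
  exact card_equiv e₁.symm (by simp)

end Packing

section Parseval

variable {A : Type*} [AddCommGroup A] [Fintype A]

lemma sum_addChar_mul_conj (f g : A → ℂ) :
    ∑ ψ : AddChar A ℂ, (∑ a, f a * ψ a) * conj (∑ b, g b * ψ b) =
      Fintype.card A * ∑ a, f a * conj (g a) := by
  classical
  calc ∑ ψ : AddChar A ℂ, (∑ a, f a * ψ a) * conj (∑ b, g b * ψ b)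
      = ∑ a, ∑ b, f a * conj (g b) * ∑ ψ : AddChar A ℂ, ψ (a - b) := by
        simp_rw [map_sum, sum_mul_sum, mul_sum]
        rw [sum_comm]
        refine sum_congr rfl fun a _ => ?_
        rw [sum_comm]
        refine sum_congr rfl fun b _ => sum_congr rfl fun ψ _ => ?_
        rw [map_mul, ← AddChar.map_neg_eq_conj, sub_eq_add_neg, AddChar.map_add_eq_mul]
        ring
    _ = Fintype.card A * ∑ a, f a * conj (g a) := by
        simp [AddChar.sum_apply_eq_ite, sub_eq_zero, mul_sum, mul_comm]

end Parseval

lemma Int.mul_add_one_nonneg (j : ℤ) : 0 ≤ j * (j + 1) := by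
  rcases le_or_gt 0 j with h | h
  · positivity
  · exact mul_nonneg_of_nonpos_of_nonpos h.le (by omega)

section CharacterSums

variable {ι G : Type*} [Fintype ι] [DecidableEq ι] [AddCommGroup G] [Fintype G] [DecidableEq G]

lemma sum_neighborCount_mul_addChar (C : Finset (ι → G)) (ψ : AddChar (ι → G) ℂ) :
    ∑ v, (neighborCount C v : ℂ) * ψ v = (∑ x with hammingNorm x = 1, ψ x) * ∑ c ∈ C, ψ c := by
  calc ∑ v, (neighborCount C v : ℂ) * ψ v
      = ∑ c ∈ C, ∑ v, if hammingDist v c = 1 then ψ v else 0 := by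
        simp_rw [neighborCount, natCast_card_filter, sum_mul, ite_mul, one_mul, zero_mul]
        rw [sum_comm]
    _ = ∑ c ∈ C, ∑ x, if hammingNorm x = 1 then ψ x * ψ c else 0 := by
        refine sum_congr rfl fun c _ => (Fintype.sum_equiv (Equiv.addRight c) _ _ ?_).symm
        intro x
        simp only [Equiv.coe_addRight, hammingDist_comm _ c, hammingDist_eq_hammingNorm,
          add_comm x c, neg_add_cancel_left, AddChar.map_add_eq_mul, mul_comm (ψ c)]
    _ = (∑ x with hammingNorm x = 1, ψ x) * ∑ c ∈ C, ψ c := by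
        rw [sum_filter, sum_mul_sum, sum_comm]
        simp [ite_mul]

lemma sum_neighborCount (C : Finset (ι → G)) :
    ∑ v, neighborCount C v = #C * (Fintype.card ι * (Fintype.card G - 1)) := by
  have h := sum_neighborCount_mul_addChar C 0
  simp only [AddChar.zero_apply, mul_one, sum_const, nsmul_eq_mul] at h
  rw [card_hammingNorm_eq_one, mul_comm] at h
  exact_mod_cast h

lemma exists_sum_addChar_hammingNorm_eq_one (ψ : AddChar (ι → G) ℂ) :
    ∃ k : ℕ, ∑ x with hammingNorm x = 1, ψ x = Fintype.card G * k - Fintype.card ι := by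
  have h (i : ι) : ∑ a with a ≠ 0, ψ (Pi.single i a) =
      (if ψ.compAddMonoidHom (.single _ i) = 0 then (Fintype.card G : ℂ) else 0) - 1 := by
    rw [← AddChar.sum_eq_ite, filter_ne', sum_erase_eq_sub (mem_univ 0)]
    simp
  refine ⟨#{i | ψ.compAddMonoidHom (AddMonoidHom.single _ i) = 0}, ?_⟩
  rw [sum_hammingNorm_eq_one, sum_congr rfl fun i _ => h i, sum_sub_distrib, sum_ite]
  simp [mul_comm]

lemma sum_sphere_mul_normSq_eq {C : Finset (ι → G)}
    (hd : ∀ x ∈ C, ∀ y ∈ C, x ≠ y → 2 ≤ hammingDist x y) :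
    ∑ ψ : AddChar (ι → G) ℂ, (∑ x with hammingNorm x = 1, ψ x) *
        ((∑ x with hammingNorm x = 1, ψ x) + Fintype.card G) * Complex.normSq (∑ c ∈ C, ψ c) =
      Fintype.card G ^ Fintype.card ι * ∑ v, (neighborCount C v : ℂ) ^ 2 := by
  set σ : AddChar (ι → G) ℂ → ℂ := fun ψ => ∑ x with hammingNorm x = 1, ψ x
  set S : AddChar (ι → G) ℂ → ℂ := fun ψ => ∑ c ∈ C, ψ c
  have hσ : ∀ ψ, conj (σ ψ) = σ ψ := fun ψ => by
    obtain ⟨k, hk⟩ := exists_sum_addChar_hammingNorm_eq_one ψ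
    simp only [σ, hk, map_sub, map_mul, map_natCast]
  have hparseval₁ : ∑ ψ, σ ψ * S ψ * conj (σ ψ * S ψ) =
      Fintype.card G ^ Fintype.card ι * ∑ v, (neighborCount C v : ℂ) ^ 2 := by
    simp only [σ, S, ← sum_neighborCount_mul_addChar, sum_addChar_mul_conj, Fintype.card_fun]
    simp [sq]
  have hparseval₂ : ∑ ψ, σ ψ * S ψ * conj (S ψ) = 0 := by
    have hS : ∀ ψ : AddChar (ι → G) ℂ, ∑ c ∈ C, ψ c = ∑ a, (if a ∈ C then 1 else 0) * ψ a :=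
      fun ψ => by simp [ite_mul]
    simp only [σ, S, ← sum_neighborCount_mul_addChar]
    simp only [hS, sum_addChar_mul_conj, MonoidWithZeroHom.map_ite_one_zero, mul_ite, mul_one,
      mul_zero, sum_ite_mem, univ_inter]
    rw [sum_eq_zero fun c hc => by rw [neighborCount_eq_zero_of_mem hd hc, Nat.cast_zero],
      mul_zero]
  calc ∑ ψ, σ ψ * (σ ψ + Fintype.card G) * (Complex.normSq (S ψ) : ℂ)
      = ∑ ψ, (σ ψ * S ψ * conj (σ ψ * S ψ) + Fintype.card G * (σ ψ * S ψ * conj (S ψ))) := by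
        refine sum_congr rfl fun ψ _ => ?_
        rw [← Complex.mul_conj, map_mul, hσ]
        ring
    _ = Fintype.card G ^ Fintype.card ι * ∑ v, (neighborCount C v : ℂ) ^ 2 := by
        rw [sum_add_distrib, ← mul_sum, hparseval₁, hparseval₂, mul_zero, add_zero]

theorem card_sq_mul_le_sum_sq_neighborCount {C : Finset (ι → G)}
    (hd : ∀ x ∈ C, ∀ y ∈ C, x ≠ y → 2 ≤ hammingDist x y)
    (hq : Fintype.card G ∣ Fintype.card ι) :
    Fintype.card ι * (Fintype.card G - 1) * (Fintype.card ι * (Fintype.card G - 1) + Fintype.card G)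
        * #C ^ 2 ≤ Fintype.card G ^ Fintype.card ι * ∑ v, neighborCount C v ^ 2 := by
  obtain ⟨r, hr⟩ := hq
  choose k hk using exists_sum_addChar_hammingNorm_eq_one (ι := ι) (G := G)
  set j : AddChar (ι → G) ℂ → ℤ := fun ψ => k ψ - r
  have hσ : ∀ ψ, ∑ x with hammingNorm x = 1, ψ x = ((Fintype.card G * j ψ : ℤ) : ℂ) := fun ψ => by
    simp only [j, hk, hr]; push_cast; ring
  set w : AddChar (ι → G) ℂ → ℝ := fun ψ =>
    Fintype.card G * j ψ * (Fintype.card G * j ψ + Fintype.card G)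
  have hw : ∀ ψ, 0 ≤ w ψ := fun ψ =>
    calc 0 ≤ (Fintype.card G : ℝ) ^ 2 * ((j ψ * (j ψ + 1) : ℤ) : ℝ) :=
          mul_nonneg (sq_nonneg _) (Int.cast_nonneg_iff.mpr (Int.mul_add_one_nonneg _))
      _ = w ψ := by push_cast; ring
  have hkey : ∑ ψ, w ψ * Complex.normSq (∑ c ∈ C, ψ c) =
      Fintype.card G ^ Fintype.card ι * ∑ v, (neighborCount C v : ℝ) ^ 2 := by
    apply Complex.ofReal_injective
    push_cast
    rw [← sum_sphere_mul_normSq_eq hd]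
    simp only [w, hσ]
    push_cast
    rfl
  have hw0 : (Fintype.card G * j 0 : ℝ) = Fintype.card ι * (Fintype.card G - 1 : ℕ) := by
    have h := hσ 0
    simp only [AddChar.zero_apply, sum_const, nsmul_eq_mul, mul_one,
      card_hammingNorm_eq_one] at h
    exact_mod_cast h.symm
  have hlow := single_le_sum (f := fun ψ => w ψ * Complex.normSq (∑ c ∈ C, ψ c))
    (fun ψ _ => mul_nonneg (hw ψ) (Complex.normSq_nonneg _)) (mem_univ 0)
  simp only [w, hw0, hkey, AddChar.zero_apply, sum_const, nsmul_eq_mul, mul_one,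
    Complex.normSq_natCast, ← sq] at hlow
  exact_mod_cast hlow

theorem IsFoldPacking.card_mul_le [Nonempty ι] [Nontrivial G] {lam : ℕ} {C : Finset (ι → G)}
    (hC : IsFoldPacking lam C) (hq : Fintype.card G ∣ Fintype.card ι) :
    #C * (Fintype.card ι * (Fintype.card G - 1) + Fintype.card G) ≤
      lam * Fintype.card G ^ Fintype.card ι := by
  set E := Fintype.card ι * (Fintype.card G - 1)
  have hE : 0 < E := Nat.mul_pos Fintype.card_pos (Nat.sub_pos_of_lt Fintype.one_lt_card)
  rcases (#C).eq_zero_or_pos with hC0 | hCpos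
  · simp [hC0]
  have hg : ∀ v, neighborCount C v ≤ lam := fun v =>
    (card_le_card (monotone_filter_right _ fun _ _ h => h.le)).trans (hC.2 v)
  have hsq : ∑ v, neighborCount C v ^ 2 ≤ lam * (#C * E) := by
    rw [← sum_neighborCount, mul_sum]
    exact sum_le_sum fun v _ => by rw [sq]; exact Nat.mul_le_mul_right _ (hg v)
  refine Nat.le_of_mul_le_mul_left ?_ (Nat.mul_pos hE hCpos)
  calc E * #C * (#C * (E + Fintype.card G)) = E * (E + Fintype.card G) * #C ^ 2 := by ring
    _ ≤ Fintype.card G ^ Fintype.card ι * ∑ v, neighborCount C v ^ 2 :=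
        card_sq_mul_le_sum_sq_neighborCount hC.1 hq
    _ ≤ Fintype.card G ^ Fintype.card ι * (lam * (#C * E)) := Nat.mul_le_mul_left _ hsq
    _ = E * #C * (lam * Fintype.card G ^ Fintype.card ι) := by ring

end CharacterSums

section CosetCode

variable {ι F V : Type*} [Fintype ι] [DecidableEq ι] [Field F] [Fintype F] [DecidableEq F]
  [AddCommGroup V] [Module F V] [DecidableEq V]

def cosetCode (H : (ι → F) →ₗ[F] V) (e : V) (T : Finset F) : Finset (ι → F) :=
  {x | ∃ t ∈ T, H x = t • e}

variable {H : (ι → F) →ₗ[F] V} {e : V}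

lemma isFoldPacking_cosetCode (hinj : Set.InjOn H {x | hammingNorm x ≤ 1})
    (hline : ∀ x, hammingNorm x = 1 → ∀ t : F, H x ≠ t • e) (T : Finset F) :
    IsFoldPacking #T (cosetCode H e T) := by
  refine ⟨fun x hx y hy hxy => ?_, fun v => ?_⟩
  · simp only [cosetCode, mem_filter, mem_univ, true_and] at hx hy
    obtain ⟨t, -, hx⟩ := hx
    obtain ⟨t', -, hy⟩ := hy
    by_contra hlt
    have h1 : hammingNorm (-x + y) = 1 := by
      have := hammingDist_ne_zero.mpr hxy
      rw [← hammingDist_eq_hammingNorm]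
      omega
    exact hline _ h1 (t' - t) (by rw [map_add, map_neg, hx, hy, sub_smul, neg_add_eq_sub])
  · calc #{c ∈ cosetCode H e T | hammingDist v c ≤ 1}
        ≤ #(T.image (· • e)) := by
          refine card_le_card_of_injOn H (fun c hc => ?_) fun c hc c' hc' hcc' => ?_
          · simp only [cosetCode, coe_filter, mem_filter, mem_univ, true_and] at hc
            obtain ⟨⟨t, ht, hc⟩, -⟩ := hc
            exact mem_image.mpr ⟨t, ht, hc.symm⟩
          · simp only [coe_filter, Set.mem_ofPred_eq] at hc hc'
            rw [hammingDist_eq_hammingNorm] at hc hc'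
            have := hinj hc.2 hc'.2 (by simp only [map_add, hcc'])
            exact add_left_cancel this
      _ ≤ #T := card_image_le

lemma card_cosetCode_mul [Fintype V] (hH : Function.Surjective H) (he : e ≠ 0) (T : Finset F) :
    #(cosetCode H e T) * Fintype.card V = #T * Fintype.card F ^ Fintype.card ι := by
  have hfiber : ∀ u, #{x | H x = u} = #{x | H x = 0} := fun u =>
    AddMonoidHom.card_fiber_eq_of_mem_range H (hH u) (hH 0)
  have hker : #{x | H x = 0} * Fintype.card V = Fintype.card F ^ Fintype.card ι := by
    calc #{x | H x = 0} * Fintype.card V = ∑ u, #{x | H x = u} := by simp [hfiber, mul_comm]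
      _ = Fintype.card (ι → F) := (card_eq_sum_card_fiberwise fun _ _ => mem_univ _).symm
      _ = Fintype.card F ^ Fintype.card ι := Fintype.card_fun
  have hcode : cosetCode H e T = T.biUnion fun t => {x | H x = t • e} := by
    ext x
    simp [cosetCode, eq_comm]
  rw [hcode, card_biUnion, sum_congr rfl fun t _ => hfiber _, sum_const, smul_eq_mul, mul_assoc,
    hker]
  intro t _ t' _ htt'
  refine disjoint_filter.mpr fun x _ hx hx' => htt' (smul_left_injective F he ?_)
  simp only [← hx, hx']

end CosetCode

namespace Projectivization

variable {F V : Type*} [Field F] [AddCommGroup V] [Module F V]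

lemma eq_of_smul_rep_eq {p p' : ℙ F V} {a b : F} (ha : a ≠ 0) (h : a • p.rep = b • p'.rep) :
    p = p' := by
  rw [← p.mk_rep, ← p'.mk_rep, mk_eq_mk_iff']
  exact ⟨a⁻¹ * b, by rw [mul_smul, ← h, inv_smul_smul₀ ha]⟩

lemma mem_span_rep_of_notMem_submodule {P : ℙ F V} {v : V} (hv : v ∉ P.submodule) :
    v ∈ Submodule.span F (Set.range fun p : {p : ℙ F V // p ≠ P} => p.1.rep) := by
  have hv0 : v ≠ 0 := fun h => hv (h ▸ P.submodule.zero_mem)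
  have hP : mk F v hv0 ≠ P := by
    rintro rfl
    exact hv (Submodule.mem_span_singleton_self v)
  obtain ⟨a, ha⟩ := exists_smul_eq_mk_rep F v hv0
  rw [← inv_smul_smul a v, ha]
  exact Submodule.smul_mem _ _ (Submodule.subset_span ⟨⟨_, hP⟩, rfl⟩)

variable [Fintype (ℙ F V)] [DecidableEq (ℙ F V)] (P : ℙ F V)

lemma card_ne_mul_card_sub_one [Fintype F] [Fintype V] :
    Fintype.card {p // p ≠ P} * (Fintype.card F - 1) = Fintype.card V - Fintype.card F := by
  have h := card' F V
  simp only [Nat.card_eq_fintype_card] at h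
  have hP : 0 < Fintype.card (ℙ F V) := Fintype.card_pos_iff.mpr ⟨P⟩
  have hF : 0 < Fintype.card F := Fintype.card_pos
  simp only [ne_eq, Fintype.card_subtype_compl, Fintype.card_subtype_eq]
  rw [Nat.sub_one_mul, h]
  omega

noncomputable def hammingCheckMap : ({p : ℙ F V // p ≠ P} → F) →ₗ[F] V :=
  Fintype.linearCombination F fun p => p.1.rep

lemma hammingCheckMap_surjective [FiniteDimensional F V] (hV : 1 < Module.finrank F V) :
    Function.Surjective (hammingCheckMap P) := by
  have hPtop : P.submodule ≠ ⊤ := fun h => by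
    have := P.finrank_submodule
    rw [h, finrank_top] at this
    omega
  obtain ⟨w, -, hw⟩ := SetLike.exists_of_lt hPtop.lt_top
  rw [hammingCheckMap, ← span_range_eq_top_iff_surjective_fintypeLinearCombination,
    Submodule.eq_top_iff']
  intro v
  by_cases hv : v ∈ P.submodule
  · have hvw : v + w ∉ P.submodule := fun h => hw (by simpa using P.submodule.sub_mem h hv)
    simpa using Submodule.sub_mem _ (mem_span_rep_of_notMem_submodule hvw)
      (mem_span_rep_of_notMem_submodule hw)
  · exact mem_span_rep_of_notMem_submodule hv

variable [DecidableEq F]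

lemma hammingCheckMap_injOn : Set.InjOn (hammingCheckMap P) {x | hammingNorm x ≤ 1} := by
  intro x hx y hy hxy
  rcases isEmpty_or_nonempty {p : ℙ F V // p ≠ P} with hι | hι
  · exact Subsingleton.elim x y
  obtain ⟨i, a, rfl⟩ := exists_eq_single_of_hammingNorm_le_one hx
  obtain ⟨j, b, rfl⟩ := exists_eq_single_of_hammingNorm_le_one hy
  simp only [hammingCheckMap, Fintype.linearCombination_apply_single] at hxy
  by_cases ha : a = 0
  · have hb : b = 0 := by simpa [ha, rep_nonzero] using hxy.symm
    simp [ha, hb]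
  obtain rfl : i = j := Subtype.ext (eq_of_smul_rep_eq ha hxy)
  rw [smul_left_injective F (rep_nonzero _) hxy]

lemma hammingCheckMap_ne_smul_rep {x : {p : ℙ F V // p ≠ P} → F} (hx : hammingNorm x = 1)
    (t : F) : hammingCheckMap P x ≠ t • P.rep := by
  obtain ⟨i, a, ha, rfl⟩ := hammingNorm_eq_one_iff.mp hx
  rw [hammingCheckMap, Fintype.linearCombination_apply_single]
  exact fun h => i.2 (eq_of_smul_rep_eq ha h)

theorem exists_isFoldPacking [Fintype F] [Fintype V] [DecidableEq V]
    (hV : 1 < Module.finrank F V) (T : Finset F) :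
    ∃ C : Finset ({p // p ≠ P} → F), IsFoldPacking #T C ∧
      #C * Fintype.card V = #T * Fintype.card F ^ Fintype.card {p // p ≠ P} :=
  ⟨cosetCode (hammingCheckMap P) P.rep T,
    isFoldPacking_cosetCode (hammingCheckMap_injOn P)
      (fun _ hx t => hammingCheckMap_ne_smul_rep P hx t) T,
    card_cosetCode_mul (hammingCheckMap_surjective P hV) P.rep_nonzero T⟩

end Projectivization

theorem exists_isFoldPacking_fin {q m n lam : ℕ} (hq : IsPrimePow q) (hm : 2 ≤ m)
    (hn : n * (q - 1) = q ^ m - q) (hlam : lam ≤ q) :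
    ∃ C : Finset (Fin n → Fin q), IsFoldPacking lam C ∧ #C * q ^ m = lam * q ^ n := by
  classical
  obtain ⟨p, k, hp, hk, rfl⟩ := hq
  have : Fact p.Prime := ⟨hp.nat_prime⟩
  let F := GaloisField p k
  let _ : Fintype F := Fintype.ofFinite F
  let _ : Fintype (ℙ F (Fin m → F)) := Fintype.ofFinite _
  have hF : Fintype.card F = p ^ k := by
    rw [Fintype.card_eq_nat_card, GaloisField.card p k hk.ne']
  have : Nonempty (Fin m) := ⟨⟨0, by omega⟩⟩
  obtain ⟨P⟩ : Nonempty (ℙ F (Fin m → F)) := inferInstance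
  obtain ⟨T, -, hT⟩ := exists_subset_card_eq (s := (univ : Finset F)) (n := lam) (by simpa [hF])
  obtain ⟨C, hC, hcard⟩ := P.exists_isFoldPacking (by simp; omega) T
  have hι : Fintype.card {x // x ≠ P} = n := by
    have h := P.card_ne_mul_card_sub_one
    rw [Fintype.card_fun, hF, Fintype.card_fin, ← hn] at h
    exact Nat.eq_of_mul_eq_mul_right
      (Nat.sub_pos_of_lt (Nat.one_lt_pow hk.ne' hp.nat_prime.one_lt)) h
  let e := (Fintype.equivFinOfCardEq hι).arrowCongr (Fintype.equivFinOfCardEq hF)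
  refine ⟨C.map e.toEmbedding, hT ▸ hC.map e (hammingDist_arrowCongr _ _), ?_⟩
  rw [card_map, ← hT]
  simpa [Fintype.card_fun, hF, hι] using hcard

theorem IsFoldPacking.card_mul_le_fin {q m n lam : ℕ} (hq : 2 ≤ q) (hm : 2 ≤ m)
    (hn : n * (q - 1) = q ^ m - q) {C : Finset (Fin n → Fin q)} (hC : IsFoldPacking lam C) :
    #C * q ^ m ≤ lam * q ^ n := by
  have hqm : q * 2 ≤ q ^ m :=
    calc q * 2 ≤ q ^ 2 := by rw [sq]; exact Nat.mul_le_mul_left q hq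
      _ ≤ q ^ m := Nat.pow_le_pow_right (by omega) hm
  have : NeZero q := ⟨by omega⟩
  have : Nontrivial (Fin q) := Fin.nontrivial_iff_two_le.mpr hq
  have : Nonempty (Fin n) := ⟨⟨0, Nat.pos_of_ne_zero fun h => by simp [h] at hn; omega⟩⟩
  have hcop : q.Coprime (q - 1) := (Nat.coprime_self_sub_right (by omega)).2 q.coprime_one_right
  have hdvd : q ∣ n :=
    hcop.dvd_of_dvd_mul_right (hn ▸ Nat.dvd_sub (dvd_pow_self q (by omega)) dvd_rfl)
  have h := hC.card_mul_le (by simpa using hdvd)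
  simp only [Fintype.card_fin, hn] at h
  rwa [Nat.sub_add_cancel (by omega)] at h

theorem stmt_11_general (q m n lam : ℕ) (hq : IsPrimePow q) (hm : 2 ≤ m)
    (hn : n * (q - 1) = q ^ m - q) (hlamq : lam ≤ q) :
    IsGreatest {s : ℚ | ∃ C : Finset (Fin n → Fin q),
        (∀ x ∈ C, ∀ y ∈ C, x ≠ y → 2 ≤ hammingDist x y) ∧
        (∀ v : Fin n → Fin q,
          (C.filter (fun c => hammingDist v c ≤ 1)).card ≤ lam) ∧
        s = C.card}
      ((lam : ℚ) * q ^ n / (n * q - n + q)) := by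
  have hq2 := hq.two_le
  have hden : (n * q - n + q : ℚ) = q ^ m := by
    have hq_le : q ≤ q ^ m := Nat.le_self_pow (by omega) q
    have : ((n * (q - 1) : ℕ) : ℚ) = ((q ^ m - q : ℕ) : ℚ) := congrArg _ hn
    push_cast [Nat.cast_sub (by omega : 1 ≤ q), Nat.cast_sub hq_le] at this
    linarith
  have hpos : (0 : ℚ) < q ^ m := by positivity
  rw [hden]
  obtain ⟨C, hC, hcard⟩ := exists_isFoldPacking_fin hq hm hn hlamq
  refine ⟨⟨C, hC.1, hC.2, ?_⟩, ?_⟩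
  · rw [div_eq_iff hpos.ne']
    exact_mod_cast hcard.symm
  rintro _ ⟨C, hd, hcov, rfl⟩
  rw [le_div_iff₀ hpos]
  exact_mod_cast IsFoldPacking.card_mul_le_fin hq2 hm hn ⟨hd, hcov⟩

/-- The maximum size of a λ-fold 1-packing with minimum distance ≥ 2 in
H((qᵐ−q)/(q−1), q), λ ≤ q, is exactly λqⁿ/(nq−n+q). -/
theorem stmt_11 (q m n lam : ℕ) (hq : IsPrimePow q) (hm : 2 ≤ m)
    (hn : n * (q - 1) = q ^ m - q) (hlam1 : 1 ≤ lam) (hlamq : lam ≤ q) :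
    IsGreatest {s : ℚ | ∃ C : Finset (Fin n → Fin q),
        (∀ x ∈ C, ∀ y ∈ C, x ≠ y → 2 ≤ hammingDist x y) ∧
        (∀ v : Fin n → Fin q,
          (C.filter (fun c => hammingDist v c ≤ 1)).card ≤ lam) ∧
        s = C.card}
      ((lam : ℚ) * q ^ n / (n * q - n + q)) :=
  stmt_11_general q m n lam hq hm hn hlamq
end
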